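/- Let A be a pseudo-BCI-algebra with order x ≤ y iff x → y = 1, and group part G_A = {x → 1 : x ∈ A}. Then G_A is exactly the set of maximal elements of (A, ≤), and for every x ∈ A the element g = (x → 1) → 1 is the unique element of G_A with x ≤ g. Consequently, x ∈ G_A iff x = (x → 1) → 1. -/
import Mathlib


class PseudoBCI (A : Type*) where
  ar : A → A → A
  sq : A → A → A
  one : A
  ax1 : ∀ x y z : A, sq (ar x y) (sq (ar y z) (ar x z)) = one
  ax2 : ∀ x y z : A, ar (sq x y) (ar (sq y z) (sq x z)) = one
  ax3 : ∀ x : A, ar one x = x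
  ax4 : ∀ x : A, sq one x = x
  ax5 : ∀ x y : A, ar x y = one → ar y x = one → x = y

open PseudoBCI

section Lemmas

variable {A : Type*} [PseudoBCI A]

lemma mp1 {x y : A} (h : ar x y = one) (z : A) : sq (ar y z) (ar x z) = one := by
  have t := ax1 x y z; rwa [h, ax4] at t

lemma lemA (x y : A) : sq x (sq (ar x y) y) = one := by
  have t := ax1 one x y; rwa [ax3, ax3] at t

lemma lemB (x y : A) : ar x (ar (sq x y) y) = one := by
  have t := ax2 one x y; rwa [ax4, ax4] at t

lemma ar_refl (x : A) : ar x x = one := by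
  have t := lemB one x; rwa [ax3, ax4] at t

lemma sq_refl (x : A) : sq x x = one := by
  have t := lemA one x; rwa [ax4, ax3] at t

lemma ar_of_sq {x y : A} (h : sq x y = one) : ar x y = one := by
  have t := lemB x y; rwa [h, ax3] at t

lemma sq_of_ar {x y : A} (h : ar x y = one) : sq x y = one := by
  have t := lemA x y; rwa [h, ax4] at t

lemma tr {x y z : A} (hxy : ar x y = one) (hyz : ar y z = one) : ar x z = one := by
  have t := mp1 hxy z; rwa [hyz, ax4] at t

lemma NM (x : A) : ar x one = sq x one := by
  have h1 : sq (ar x one) (sq x one) = one := by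
    have t := ax1 x one x; rwa [ax3, ar_refl] at t
  have h2 : ar (sq x one) (ar x one) = one := by
    have t := ax2 x one x; rwa [ax4, sq_refl] at t
  exact ax5 _ _ (ar_of_sq h1) h2

lemma le_NN (x : A) : ar x (ar (ar x one) one) = one := by
  have t := lemA x one
  rw [← NM] at t
  exact ar_of_sq t

lemma antiN {x y : A} (h : ar x y = one) : ar (ar y one) (ar x one) = one :=
  ar_of_sq (mp1 h one)

lemma adjA {a b c : A} (h : sq a (sq b c) = one) : ar b (ar a c) = one := by
  have h1 : ar b (ar (sq b c) c) = one := lemB b c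
  have h2 : ar (ar (sq b c) c) (ar a c) = one := ar_of_sq (mp1 (ar_of_sq h) c)
  exact tr h1 h2

lemma lemC (x y : A) : sq (ar x y) (ar (ar y x) one) = one := by
  have t := ax1 x y x
  rw [ar_refl] at t
  rwa [← NM] at t

lemma adjN {u v : A} (h : ar u (ar v one) = one) : ar v (ar u one) = one := by
  apply adjA
  rw [NM v] at h
  exact sq_of_ar h

lemma T1 (x y : A) : ar (ar (ar x y) (ar x one)) (ar y one) = one := by
  have ha : sq (ar x one) (sq y (ar x y)) = one := by
    have t := ax1 x one y; rwa [ax3] at t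
  have hb : ar y (ar (ar x one) (ar x y)) = one := adjA ha
  have hc := lemC (ar x one) (ar x y)
  have hd : ar y (ar (ar (ar x y) (ar x one)) one) = one := tr hb (ar_of_sq hc)
  exact adjN hd

lemma N3 (a : A) : ar (ar (ar a one) one) one = ar a one :=
  ax5 _ _ (antiN (le_NN a)) (le_NN (ar a one))

lemma max_of_N {a y : A} (h : ar (ar a one) y = one) : y = ar a one := by
  have t := T1 (ar a one) y
  rw [h, ax3] at t
  have t2 := antiN t
  rw [N3] at t2
  exact ax5 _ _ (tr (le_NN y) t2) h

end Lemmas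

theorem stmt10 {A : Type*} [PseudoBCI A] :
    (∀ x : A, (∃ a : A, ar a one = x) ↔ (∀ y : A, ar x y = one → y = x)) ∧
    (∀ x : A, (∃ a : A, ar a one = ar (ar x one) one) ∧
      ar x (ar (ar x one) one) = one ∧
      (∀ g : A, (∃ a : A, ar a one = g) → ar x g = one → g = ar (ar x one) one)) ∧
    (∀ x : A, (∃ a : A, ar a one = x) ↔ x = ar (ar x one) one) := by
  refine ⟨fun x => ⟨?_, ?_⟩, fun x => ⟨⟨ar x one, rfl⟩, le_NN x, ?_⟩, fun x => ⟨?_, ?_⟩⟩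
  · rintro ⟨a, rfl⟩ y h
    exact max_of_N h
  · intro h
    exact ⟨ar x one, h _ (le_NN x)⟩
  · rintro g ⟨a, rfl⟩ hxg
    have t := T1 x (ar a one)
    rw [hxg, ax3] at t
    have t2 := antiN t
    rw [N3] at t2
    exact (max_of_N t2).symm
  · rintro ⟨a, rfl⟩
    exact (N3 a).symm
  · intro h
    exact ⟨ar x one, h.symm⟩
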